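/- For a convex body K in ℝⁿ containing the origin in its interior, if v ∈ Sⁿ⁻¹ can be written as v = Σₖ cₖ uₖ with cₖ > 0 and h_K(v) = Σₖ cₖ h_K(uₖ), then for any other convex body L with 0 in its interior satisfying h_L(v) = Σₖ cₖ h_L(uₖ), and any λ ∈ [0,1] and p ∈ (0,1], we have Σₖ cₖ ((1-λ)h_K(uₖ)^p + λ h_L(uₖ)^p)^{1/p} ≤ ((1-λ)h_K(v)^p + λ h_L(v)^p)^{1/p}. -/

import Mathlib

/-!
For `0 < p ≤ 1` the weighted `p`-mean `M(a, b) = ((1 - λ) a ^ p + λ b ^ p) ^ (1 / p)` is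
positively homogeneous and superadditive on nonnegative arguments. Hence
`∑ cₖ M(h_K uₖ, h_L uₖ) = ∑ M(cₖ h_K uₖ, cₖ h_L uₖ) ≤ M(∑ cₖ h_K uₖ, ∑ cₖ h_L uₖ) = M(h_K v, h_L v)`.
Superadditivity of `x ↦ (∑ᵢ wᵢ xᵢ ^ p) ^ (1 / p)` over summands `x₁, …, x_m` is Minkowski's
inequality for the exponent `1 / p ≥ 1`, applied to the vectors `(wᵢ xₖᵢ ^ p)ₖ`, one for each `i`.
-/

open Real Set
open scoped RealInnerProductSpace

noncomputable def suppFn {n : ℕ} (K : Set (EuclideanSpace ℝ (Fin n)))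
    (u : EuclideanSpace ℝ (Fin n)) : ℝ :=
  sSup ((fun x => ⟪x, u⟫) '' K)

open Finset

theorem Real.Lp_sum_le_sum_Lp_of_nonneg {ι κ : Type*} (s : Finset ι) (t : Finset κ)
    {q : ℝ} (hq : 1 ≤ q) {g : ι → κ → ℝ} (hg : ∀ i k, 0 ≤ g i k) :
    (∑ k ∈ t, (∑ i ∈ s, g i k) ^ q) ^ (1 / q) ≤ ∑ i ∈ s, (∑ k ∈ t, g i k ^ q) ^ (1 / q) := by
  classical
  induction s using Finset.induction_on with
  | empty => simp [zero_rpow (by positivity : q ≠ 0), zero_rpow (by positivity : q⁻¹ ≠ 0)]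
  | insert a s ha ih =>
    simp only [sum_insert ha]
    exact (Lp_add_le_of_nonneg t hq (fun k _ => hg a k)
      (fun k _ => sum_nonneg fun i _ => hg i k)).trans (add_le_add_right ih _)

theorem Real.sum_rpow_mean_le {ι κ : Type*} (s : Finset ι) (t : Finset κ)
    {p : ℝ} (hp0 : 0 < p) (hp1 : p ≤ 1) {w : ι → ℝ} (hw : ∀ i, 0 ≤ w i)
    {x : κ → ι → ℝ} (hx : ∀ k i, 0 ≤ x k i) :
    ∑ k ∈ t, (∑ i ∈ s, w i * x k i ^ p) ^ (1 / p)
      ≤ (∑ i ∈ s, w i * (∑ k ∈ t, x k i) ^ p) ^ (1 / p) := by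
  have hq : 1 ≤ 1 / p := by rw [le_div_iff₀ hp0]; linarith
  have minkowski := Lp_sum_le_sum_Lp_of_nonneg s t hq (g := fun i k => w i * x k i ^ p)
    (fun i k => mul_nonneg (hw i) (rpow_nonneg (hx k i) p))
  have hcol : ∀ i, (∑ k ∈ t, (w i * x k i ^ p) ^ (1 / p)) ^ (1 / (1 / p))
      = w i * (∑ k ∈ t, x k i) ^ p := fun i => by
    simp only [one_div, inv_inv, mul_rpow (hw i) (rpow_nonneg (hx _ i) p),
      rpow_rpow_inv (hx _ i) hp0.ne', ← mul_sum]
    rw [mul_rpow (rpow_nonneg (hw i) _) (sum_nonneg fun k _ => hx k i),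
      rpow_inv_rpow (hw i) hp0.ne']
  rw [sum_congr rfl fun i _ => hcol i, one_div_one_div] at minkowski
  have hlhs : 0 ≤ ∑ k ∈ t, (∑ i ∈ s, w i * x k i ^ p) ^ (1 / p) :=
    sum_nonneg fun k _ => rpow_nonneg
      (sum_nonneg fun i _ => mul_nonneg (hw i) (rpow_nonneg (hx k i) p)) _
  have hrhs : 0 ≤ ∑ i ∈ s, w i * (∑ k ∈ t, x k i) ^ p :=
    sum_nonneg fun i _ => mul_nonneg (hw i) (rpow_nonneg (sum_nonneg fun k _ => hx k i) p)
  simpa only [one_div] using (le_rpow_inv_iff_of_pos hlhs hrhs hp0).2 minkowski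

theorem Real.sum_rpow_mean_two_le {κ : Type*} (t : Finset κ) {p w₁ w₂ : ℝ} (hp0 : 0 < p)
    (hp1 : p ≤ 1) (hw₁ : 0 ≤ w₁) (hw₂ : 0 ≤ w₂) {a b : κ → ℝ} (ha : ∀ k, 0 ≤ a k)
    (hb : ∀ k, 0 ≤ b k) :
    ∑ k ∈ t, (w₁ * a k ^ p + w₂ * b k ^ p) ^ (1 / p)
      ≤ (w₁ * (∑ k ∈ t, a k) ^ p + w₂ * (∑ k ∈ t, b k) ^ p) ^ (1 / p) := by
  simpa [Fin.sum_univ_two] using sum_rpow_mean_le univ t hp0 hp1 (w := ![w₁, w₂])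
    (x := fun k => ![a k, b k]) (Fin.forall_fin_two.2 ⟨hw₁, hw₂⟩)
    (fun k => Fin.forall_fin_two.2 ⟨ha k, hb k⟩)

theorem Real.mul_rpow_mean_two {p c w₁ w₂ a b : ℝ} (hp : p ≠ 0) (hc : 0 ≤ c) (hw₁ : 0 ≤ w₁)
    (hw₂ : 0 ≤ w₂) (ha : 0 ≤ a) (hb : 0 ≤ b) :
    c * (w₁ * a ^ p + w₂ * b ^ p) ^ (1 / p) = (w₁ * (c * a) ^ p + w₂ * (c * b) ^ p) ^ (1 / p) := by
  rw [mul_rpow hc ha, mul_rpow hc hb,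
    show w₁ * (c ^ p * a ^ p) + w₂ * (c ^ p * b ^ p) = c ^ p * (w₁ * a ^ p + w₂ * b ^ p) by ring,
    mul_rpow (rpow_nonneg hc p) (by positivity), one_div, rpow_rpow_inv hc hp]

theorem suppFn_nonneg {n : ℕ} {K : Set (EuclideanSpace ℝ (Fin n))}
    (h0 : (0 : EuclideanSpace ℝ (Fin n)) ∈ K) (u : EuclideanSpace ℝ (Fin n)) :
    0 ≤ suppFn K u :=
  Real.sSup_nonneg' ⟨0, ⟨0, h0, inner_zero_left u⟩, le_rfl⟩

theorem lp_mean_support_subadditive_general {n m : ℕ}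
    (K L : Set (EuclideanSpace ℝ (Fin n)))
    (hK0 : (0 : EuclideanSpace ℝ (Fin n)) ∈ interior K)
    (hL0 : (0 : EuclideanSpace ℝ (Fin n)) ∈ interior L)
    (v : EuclideanSpace ℝ (Fin n))
    (u : Fin m → EuclideanSpace ℝ (Fin n))
    (c : Fin m → ℝ) (hc : ∀ k, 0 < c k)
    (hKsum : suppFn K v = ∑ k, c k * suppFn K (u k))
    (hLsum : suppFn L v = ∑ k, c k * suppFn L (u k))
    (lam p : ℝ) (hlam : lam ∈ Icc (0 : ℝ) 1) (hp : p ∈ Ioc (0 : ℝ) 1) :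
    ∑ k, c k * ((1 - lam) * suppFn K (u k) ^ p + lam * suppFn L (u k) ^ p) ^ (1 / p)
      ≤ ((1 - lam) * suppFn K v ^ p + lam * suppFn L v ^ p) ^ (1 / p) := by
  obtain ⟨hlam0, hlam1⟩ := hlam
  obtain ⟨hp0, hp1⟩ := hp
  have hK : ∀ w, 0 ≤ suppFn K w := suppFn_nonneg (interior_subset hK0)
  have hL : ∀ w, 0 ≤ suppFn L w := suppFn_nonneg (interior_subset hL0)
  calc ∑ k, c k * ((1 - lam) * suppFn K (u k) ^ p + lam * suppFn L (u k) ^ p) ^ (1 / p)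
      = ∑ k, ((1 - lam) * (c k * suppFn K (u k)) ^ p
          + lam * (c k * suppFn L (u k)) ^ p) ^ (1 / p) :=
        sum_congr rfl fun k _ =>
          mul_rpow_mean_two hp0.ne' (hc k).le (by linarith) hlam0 (hK _) (hL _)
    _ ≤ ((1 - lam) * (∑ k, c k * suppFn K (u k)) ^ p
          + lam * (∑ k, c k * suppFn L (u k)) ^ p) ^ (1 / p) :=
        sum_rpow_mean_two_le univ hp0 hp1 (by linarith) hlam0
          (fun k => mul_nonneg (hc k).le (hK _)) (fun k => mul_nonneg (hc k).le (hL _))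
    _ = ((1 - lam) * suppFn K v ^ p + lam * suppFn L v ^ p) ^ (1 / p) := by
        rw [hKsum, hLsum]

/-- subadditivity of the `p`-mean of support function values across
conic combinations. -/
theorem lp_mean_support_subadditive {n m : ℕ}
    (K L : Set (EuclideanSpace ℝ (Fin n)))
    (hKc : IsCompact K) (hKv : Convex ℝ K)
    (hK0 : (0 : EuclideanSpace ℝ (Fin n)) ∈ interior K)
    (hLc : IsCompact L) (hLv : Convex ℝ L)
    (hL0 : (0 : EuclideanSpace ℝ (Fin n)) ∈ interior L)
    (v : EuclideanSpace ℝ (Fin n)) (hv : ‖v‖ = 1)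
    (u : Fin m → EuclideanSpace ℝ (Fin n)) (hu : ∀ k, ‖u k‖ = 1)
    (c : Fin m → ℝ) (hc : ∀ k, 0 < c k)
    (hvsum : v = ∑ k, c k • u k)
    (hKsum : suppFn K v = ∑ k, c k * suppFn K (u k))
    (hLsum : suppFn L v = ∑ k, c k * suppFn L (u k))
    (lam p : ℝ) (hlam : lam ∈ Icc (0 : ℝ) 1) (hp : p ∈ Ioc (0 : ℝ) 1) :
    ∑ k, c k * ((1 - lam) * suppFn K (u k) ^ p + lam * suppFn L (u k) ^ p) ^ (1 / p)
      ≤ ((1 - lam) * suppFn K v ^ p + lam * suppFn L v ^ p) ^ (1 / p) :=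
  lp_mean_support_subadditive_general K L hK0 hL0 v u c hc hKsum hLsum lam p hlam hp
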